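/- arXiv:1703.05444 — 5 statements merged into one kernel-verified Lean document; each statement's English description precedes it below -/
import Mathlib

section
/- Let β ∈ ℝⁿ with β ≥ 0 and ∑ₖ βₖ = 1, and x ∈ ℝⁿ with x ≥ 0 and ∑ₖ xₖ = 1. Then there exists a constant v with min{xₖ : βₖ ≠ 0} ≤ v ≤ max{xₖ : βₖ ≠ 0} such that v ≤ ∑ₖ βₖ xₖ and v − v² = ∑ₖ βₖ (xₖ − xₖ²). -/
/-- Lemma 2 (Lemma 4 in the paper): for nonnegative β, x summing to 1, there is
a value v between the min and max of {x k : β k ≠ 0} with v ≤ ∑ β k x k and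
v − v² = ∑ β k (x k − x k²). -/
theorem exists_convex_value (n : ℕ) (hn : 0 < n) (β x : Fin n → ℝ)
    (hβ : ∀ k, 0 ≤ β k) (hβsum : ∑ k, β k = 1)
    (hx : ∀ k, 0 ≤ x k) (hxsum : ∑ k, x k = 1) :
    ∃ v : ℝ,
      (∃ k, β k ≠ 0 ∧ x k ≤ v) ∧
      (∃ k, β k ≠ 0 ∧ v ≤ x k) ∧
      v ≤ ∑ k, β k * x k ∧
      v - v ^ 2 = ∑ k, β k * (x k - (x k) ^ 2) := by
  classical
  set S := ∑ k, β k * (x k - (x k) ^ 2) with hS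
  set μ := ∑ k, β k * x k with hμ
  -- support is nonempty
  have hne : ∃ k, β k ≠ 0 := by
    by_contra h
    push_neg at h
    simp [h] at hβsum
  obtain ⟨k', hk'⟩ := hne
  set s : Finset (Fin n) := Finset.univ.filter (fun k => β k ≠ 0) with hs
  have hsne : s.Nonempty := ⟨k', by simp [hs, hk']⟩
  obtain ⟨k₀, hk₀s, hk₀min⟩ := s.exists_min_image x hsne
  obtain ⟨k₁, hk₁s, hk₁max⟩ := s.exists_max_image x hsne
  set m := x k₀ with hm
  set M := x k₁ with hM
  have hβk₀ : β k₀ ≠ 0 := (Finset.mem_filter.mp hk₀s).2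
  have hβk₁ : β k₁ ≠ 0 := (Finset.mem_filter.mp hk₁s).2
  have hmin : ∀ k, β k ≠ 0 → m ≤ x k := fun k hk =>
    hk₀min k (Finset.mem_filter.mpr ⟨Finset.mem_univ k, hk⟩)
  have hmax : ∀ k, β k ≠ 0 → x k ≤ M := fun k hk =>
    hk₁max k (Finset.mem_filter.mpr ⟨Finset.mem_univ k, hk⟩)
  have hx1 : ∀ k, x k ≤ 1 := by
    intro k
    calc x k ≤ ∑ j, x j :=
          Finset.single_le_sum (fun j _ => hx j) (Finset.mem_univ k)
      _ = 1 := hxsum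
  -- pairwise bound : for k in support, k ≠ k₀, x k + m ≤ 1
  have hpair : ∀ k, k ≠ k₀ → x k + m ≤ 1 := by
    intro k hk
    have hsub : ({k, k₀} : Finset (Fin n)) ⊆ Finset.univ := Finset.subset_univ _
    have := Finset.sum_le_sum_of_subset_of_nonneg hsub
      (fun j _ _ => hx j)
    rw [Finset.sum_pair hk] at this
    calc x k + m = x k + x k₀ := rfl
      _ ≤ ∑ j, x j := this
      _ = 1 := hxsum
  -- f m ≤ S
  have hfm : m - m ^ 2 ≤ S := by
    have hterm : ∀ k, β k * (m - m ^ 2) ≤ β k * (x k - x k ^ 2) := by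
      intro k
      by_cases hk : β k = 0
      · simp [hk]
      · by_cases hkk : k = k₀
        · subst hkk; exact le_refl _
        · apply mul_le_mul_of_nonneg_left _ (hβ k)
          have h1 : m ≤ x k := hmin k hk
          have h2 : x k + m ≤ 1 := hpair k hkk
          nlinarith
    calc m - m ^ 2 = ∑ k, β k * (m - m ^ 2) := by
          rw [← Finset.sum_mul, hβsum, one_mul]
      _ ≤ ∑ k, β k * (x k - x k ^ 2) := Finset.sum_le_sum (fun k _ => hterm k)
      _ = S := rfl
  -- S ≤ f μ  (Jensen)
  have hfμ : S ≤ μ - μ ^ 2 := by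
    have hnn : 0 ≤ ∑ k, β k * (x k - μ) ^ 2 :=
      Finset.sum_nonneg (fun k _ => mul_nonneg (hβ k) (sq_nonneg _))
    have h1 : ∀ k, β k * (x k - μ) ^ 2
        = β k * x k ^ 2 - 2 * μ * (β k * x k) + μ ^ 2 * β k := fun k => by ring
    have hexp : ∑ k, β k * (x k - μ) ^ 2
        = (∑ k, β k * x k ^ 2) - 2 * μ * μ + μ ^ 2 * 1 := by
      simp only [h1, Finset.sum_add_distrib, Finset.sum_sub_distrib,
        ← Finset.mul_sum, ← hμ, hβsum]
    have hSsplit : S = μ - ∑ k, β k * x k ^ 2 := by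
      rw [hS, hμ, ← Finset.sum_sub_distrib]
      exact Finset.sum_congr rfl (fun k _ => by ring)
    nlinarith
  -- m ≤ μ and μ ≤ M
  have hmμ : m ≤ μ := by
    calc m = ∑ k, β k * m := by rw [← Finset.sum_mul, hβsum, one_mul]
      _ ≤ ∑ k, β k * x k := by
          apply Finset.sum_le_sum
          intro k _
          by_cases hk : β k = 0
          · simp [hk]
          · exact mul_le_mul_of_nonneg_left (hmin k hk) (hβ k)
      _ = μ := rfl
  have hμM : μ ≤ M := by
    calc μ = ∑ k, β k * x k := rfl
      _ ≤ ∑ k, β k * M := by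
          apply Finset.sum_le_sum
          intro k _
          by_cases hk : β k = 0
          · simp [hk]
          · exact mul_le_mul_of_nonneg_left (hmax k hk) (hβ k)
      _ = M := by rw [← Finset.sum_mul, hβsum, one_mul]
  -- IVT
  have hcont : ContinuousOn (fun t : ℝ => t - t ^ 2) (Set.Icc m μ) :=
    (continuous_id.sub (continuous_pow 2)).continuousOn
  have hivt := intermediate_value_Icc hmμ hcont
  have hmem : S ∈ Set.Icc ((fun t : ℝ => t - t ^ 2) m)
      ((fun t : ℝ => t - t ^ 2) μ) := ⟨hfm, hfμ⟩
  obtain ⟨v, hv, hfv⟩ := hivt hmem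
  refine ⟨v, ⟨k₀, hβk₀, hv.1⟩, ⟨k₁, hβk₁, hv.2.trans hμM⟩, hv.2, hfv⟩
end

section
/- Suppose x : [t₀, ∞) → ℝⁿ solves ẋᵢ = −(1 − xᵢ)xᵢ + ∑ⱼ cⱼᵢ(t)(1 − xⱼ)xⱼ where C(t) = [cᵢⱼ(t)] is doubly stochastic with zero diagonal for every t, and x(t₀) ∈ Δₙ. Then x(t) ∈ Δₙ for all t ≥ t₀; i.e., the simplex Δₙ is positively invariant for the dynamics. -/
/-!
Summing the equations and using the row sums of `C`, the total mass `∑ xᵢ` is conserved.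
For nonnegativity, let `u = ∑ xᵢ⁻` and `ψ = ∑ (xᵢ⁻)²`. On the constraint `∑ xᵢ = 1` every
coordinate lies in `[-u, 1 + u]`, so `(1 - xⱼ) xⱼ ≥ -u (1 + u)`, and by the column sums so is
the inflow `∑ⱼ cⱼᵢ (1 - xⱼ) xⱼ`. Since the self-term `-(1 - xᵢ) xᵢ` of a negative coordinate is
positive, this gives `ψ' ≤ 2 (1 + u) u² ≤ K ψ` on every compact time interval
(`u² ≤ n ψ` by Cauchy–Schwarz), and Grönwall's inequality with `ψ(t₀) = 0` forces `ψ ≡ 0`.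
-/

open Finset Set Topology

theorem hasDerivAt_negPart_sq (a : ℝ) : HasDerivAt (fun v : ℝ => v⁻ ^ 2) (-2 * a⁻) a := by
  refine hasDerivAt_of_hasDerivAt_of_ne' (f := fun v : ℝ => v⁻ ^ 2) (g := fun v => -2 * v⁻)
    (x := 0) (fun y hy => ?_) (continuous_negPart.pow 2).continuousAt
    (continuous_negPart.const_mul (-2)).continuousAt a
  rcases hy.lt_or_gt with hy | hy
  · have heq : (fun v : ℝ => v⁻ ^ 2) =ᶠ[𝓝 y] fun v => v ^ 2 := by
      filter_upwards [Iio_mem_nhds hy] with v hv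
      rw [negPart_of_nonpos hv.le, neg_sq]
    rw [negPart_of_nonpos hy.le, neg_mul_neg]
    simpa using (hasDerivAt_pow 2 y).congr_of_eventuallyEq heq
  · have heq : (fun v : ℝ => v⁻ ^ 2) =ᶠ[𝓝 y] fun _ => 0 := by
      filter_upwards [Ioi_mem_nhds hy] with v hv
      rw [negPart_of_nonneg hv.le, zero_pow two_ne_zero]
    rw [negPart_of_nonneg hy.le, mul_zero]
    exact (hasDerivAt_const y 0).congr_of_eventuallyEq heq

theorem nonpos_of_hasDerivWithinAt_le_mul_self {f f' : ℝ → ℝ} {K a b : ℝ}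
    (hf : ContinuousOn f (Icc a b)) (hf' : ∀ x ∈ Ico a b, HasDerivWithinAt f (f' x) (Ici x) x)
    (ha : f a ≤ 0) (bound : ∀ x ∈ Ico a b, f' x ≤ K * f x) : ∀ x ∈ Icc a b, f x ≤ 0 := by
  intro x hx
  calc f x ≤ gronwallBound 0 K 0 (x - a) :=
        le_gronwallBound_of_liminf_deriv_right_le hf
          (fun x hx _ hr => (hf' x hx).liminf_right_slope_le hr) ha (by simpa using bound) x hx
    _ = 0 := gronwallBound_ε0_δ0 K _

theorem neg_mul_one_add_le_one_sub_mul {a u : ℝ} (hlo : -u ≤ a) (hhi : a ≤ 1 + u) :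
    -(u * (1 + u)) ≤ (1 - a) * a := by
  nlinarith

theorem neg_two_mul_negPart_mul_le {a b c : ℝ} (hc : -c ≤ b) :
    -2 * a⁻ * (-(1 - a) * a + b) ≤ 2 * a⁻ * c := by
  rcases le_total a 0 with ha | ha
  · rw [negPart_of_nonpos ha]
    nlinarith [mul_nonneg (neg_nonneg.2 ha) (sub_nonneg.2 hc),
      mul_nonneg (sq_nonneg a) (sub_nonneg.2 ha)]
  · simp [negPart_of_nonneg ha]

section Estimates

variable {ι : Type*} [Fintype ι]

def selfAppraisalField (C : Matrix ι ι ℝ) (y : ι → ℝ) (i : ι) : ℝ :=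
  -(1 - y i) * y i + ∑ j, C j i * (1 - y j) * y j

theorem sum_selfAppraisalField_eq_zero {C : Matrix ι ι ℝ} (hrow : ∀ j, ∑ i, C j i = 1)
    (y : ι → ℝ) : ∑ i, selfAppraisalField C y i = 0 := by
  have hout : ∑ i, ∑ j, C j i * (1 - y j) * y j = ∑ j, (1 - y j) * y j := by
    rw [Finset.sum_comm]
    simp only [mul_assoc, ← Finset.sum_mul, hrow, one_mul]
  simp only [selfAppraisalField, Finset.sum_add_distrib, hout, neg_mul, Finset.sum_neg_distrib,
    neg_add_cancel]

theorem neg_sum_negPart_le (y : ι → ℝ) (j : ι) : -∑ i, (y i)⁻ ≤ y j := by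
  have := Finset.single_le_sum (fun i _ => negPart_nonneg (y i)) (mem_univ j)
  linarith [neg_le_negPart (y j)]

theorem le_one_add_sum_negPart {y : ι → ℝ} (hy : ∑ i, y i = 1) (j : ι) :
    y j ≤ 1 + ∑ i, (y i)⁻ :=
  calc y j ≤ (y j)⁺ := le_posPart _
    _ ≤ ∑ i, (y i)⁺ := Finset.single_le_sum (fun i _ => posPart_nonneg (y i)) (mem_univ j)
    _ = ∑ i, (y i + (y i)⁻) := by congr! 1 with i; linarith [posPart_sub_negPart (y i)]
    _ = 1 + ∑ i, (y i)⁻ := by rw [Finset.sum_add_distrib, hy]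

theorem neg_mul_one_add_le_inflow {C : Matrix ι ι ℝ} (hC : ∀ i j, 0 ≤ C i j)
    (hcol : ∀ i, ∑ j, C j i = 1) {y : ι → ℝ} (hy : ∑ i, y i = 1) (i : ι) :
    -((∑ k, (y k)⁻) * (1 + ∑ k, (y k)⁻)) ≤ ∑ j, C j i * (1 - y j) * y j := by
  set u := ∑ k, (y k)⁻
  calc -(u * (1 + u)) = ∑ j, C j i * -(u * (1 + u)) := by
        rw [← Finset.sum_mul, hcol, one_mul]
    _ ≤ ∑ j, C j i * ((1 - y j) * y j) :=
        Finset.sum_le_sum fun j _ => mul_le_mul_of_nonneg_left (neg_mul_one_add_le_one_sub_mul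
          (neg_sum_negPart_le y j) (le_one_add_sum_negPart hy j)) (hC j i)
    _ = ∑ j, C j i * (1 - y j) * y j := by simp only [mul_assoc]

theorem sum_neg_two_mul_negPart_mul_selfAppraisalField_le {C : Matrix ι ι ℝ}
    (hC : ∀ i j, 0 ≤ C i j) (hcol : ∀ i, ∑ j, C j i = 1) {y : ι → ℝ} (hy : ∑ i, y i = 1) :
    ∑ i, -2 * (y i)⁻ * selfAppraisalField C y i
      ≤ 2 * (1 + ∑ i, (y i)⁻) * (∑ i, (y i)⁻) ^ 2 := by
  set u := ∑ k, (y k)⁻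
  calc ∑ i, -2 * (y i)⁻ * selfAppraisalField C y i ≤ ∑ i, 2 * (y i)⁻ * (u * (1 + u)) :=
        Finset.sum_le_sum fun i _ =>
          neg_two_mul_negPart_mul_le (neg_mul_one_add_le_inflow hC hcol hy i)
    _ = 2 * (1 + u) * u ^ 2 := by
      rw [← Finset.sum_mul, ← Finset.mul_sum]
      ring

end Estimates

section Dynamics

variable {ι : Type*} [Fintype ι] {C : ℝ → Matrix ι ι ℝ} {x : ℝ → ι → ℝ} {t₀ : ℝ}

theorem sum_eq_of_hasDerivAt_selfAppraisalField (hrow : ∀ t ≥ t₀, ∀ j, ∑ i, C t j i = 1)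
    (hx : ∀ t ≥ t₀, ∀ i, HasDerivAt (fun s => x s i) (selfAppraisalField (C t) (x t) i) t)
    {T : ℝ} (hT : t₀ ≤ T) : ∑ i, x T i = ∑ i, x t₀ i := by
  have hderiv : ∀ t ≥ t₀, HasDerivAt (fun s => ∑ i, x s i) 0 t := fun t ht => by
    simpa only [sum_selfAppraisalField_eq_zero (hrow t ht)] using
      HasDerivAt.fun_sum fun i (_ : i ∈ Finset.univ) => hx t ht i
  exact constant_of_has_deriv_right_zero
    (fun t ht => (hderiv t ht.1).continuousAt.continuousWithinAt)
    (fun t ht => (hderiv t ht.1).hasDerivWithinAt) T ⟨hT, le_rfl⟩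

theorem nonneg_of_hasDerivAt_selfAppraisalField (hC : ∀ t ≥ t₀, ∀ i j, 0 ≤ C t i j)
    (hcol : ∀ t ≥ t₀, ∀ i, ∑ j, C t j i = 1)
    (hx : ∀ t ≥ t₀, ∀ i, HasDerivAt (fun s => x s i) (selfAppraisalField (C t) (x t) i) t)
    (hsum : ∀ t ≥ t₀, ∑ i, x t i = 1) (hx₀ : ∀ i, 0 ≤ x t₀ i) {T : ℝ} (hT : t₀ ≤ T) (i : ι) :
    0 ≤ x T i := by
  set ψ : ℝ → ℝ := fun s => ∑ i, (x s i)⁻ ^ 2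
  have hψ' : ∀ s ≥ t₀,
      HasDerivAt ψ (∑ i, -2 * (x s i)⁻ * selfAppraisalField (C s) (x s) i) s :=
    fun s hs => HasDerivAt.fun_sum fun i _ => (hasDerivAt_negPart_sq _).comp s (hx s hs i)
  obtain ⟨M, hM⟩ : ∃ M, ∀ s ∈ Icc t₀ T, ∑ i, (x s i)⁻ ≤ M := by
    have hcont : ContinuousOn (fun s => ∑ i, (x s i)⁻) (Icc t₀ T) :=
      continuousOn_finsetSum _ fun i _ => continuous_negPart.comp_continuousOn
        fun s hs => (hx s hs.1 i).continuousAt.continuousWithinAt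
    exact (isCompact_Icc.bddAbove_image hcont).imp fun M hM s hs => hM ⟨s, hs, rfl⟩
  have hbound : ∀ s ∈ Ico t₀ T, ∑ i, -2 * (x s i)⁻ * selfAppraisalField (C s) (x s) i
      ≤ 2 * (1 + M) * Fintype.card ι * ψ s := fun s hs => by
    have hu₀ : 0 ≤ ∑ i, (x s i)⁻ := sum_nonneg fun i _ => negPart_nonneg _
    have huM := hM s (Ico_subset_Icc_self hs)
    have hcs : (∑ i, (x s i)⁻) ^ 2 ≤ Fintype.card ι * ψ s := by
      simpa using sq_sum_le_card_mul_sum_sq (s := Finset.univ) (f := fun i => (x s i)⁻)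
    calc _ ≤ 2 * (1 + ∑ i, (x s i)⁻) * (∑ i, (x s i)⁻) ^ 2 :=
          sum_neg_two_mul_negPart_mul_selfAppraisalField_le (hC s hs.1) (hcol s hs.1)
            (hsum s hs.1)
      _ ≤ 2 * (1 + M) * (Fintype.card ι * ψ s) :=
          mul_le_mul (by linarith) hcs (sq_nonneg _) (by linarith)
      _ = _ := by ring
  have hψT : ψ T ≤ 0 := nonpos_of_hasDerivWithinAt_le_mul_self
    (fun s hs => (hψ' s hs.1).continuousAt.continuousWithinAt)
    (fun s hs => (hψ' s hs.1).hasDerivWithinAt) (by simp [ψ, negPart_of_nonneg, hx₀]) hbound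
    T ⟨hT, le_rfl⟩
  have hψT_zero := (Finset.sum_eq_zero_iff_of_nonneg fun i _ => sq_nonneg (x T i)⁻).1
    (le_antisymm hψT (sum_nonneg fun i _ => sq_nonneg _)) i (mem_univ i)
  exact negPart_eq_zero.1 (pow_eq_zero_iff two_ne_zero |>.1 hψT_zero)

end Dynamics

/-- Positive invariance of the simplex: if C(t) is doubly stochastic with zero
diagonal for every t ≥ t₀ and x solves the self-appraisal dynamics with
x(t₀) ∈ Δₙ, then x(t) ∈ Δₙ for all t ≥ t₀. -/
theorem simplex_positively_invariant (n : ℕ) (t₀ : ℝ)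
    (C : ℝ → Matrix (Fin n) (Fin n) ℝ)
    (hC : ∀ t, t₀ ≤ t →
      (∀ i j, 0 ≤ C t i j) ∧ (∀ i, ∑ j, C t i j = 1) ∧
      (∀ j, ∑ i, C t i j = 1) ∧ (∀ i, C t i i = 0))
    (x : ℝ → Fin n → ℝ)
    (hdyn : ∀ t, t₀ ≤ t → ∀ i, HasDerivAt (fun s => x s i)
      (-(1 - x t i) * x t i + ∑ j, C t j i * (1 - x t j) * x t j) t)
    (hx0 : (∀ i, 0 ≤ x t₀ i) ∧ ∑ i, x t₀ i = 1) :
    ∀ t, t₀ ≤ t → (∀ i, 0 ≤ x t i) ∧ ∑ i, x t i = 1 := by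
  have hsum : ∀ t ≥ t₀, ∑ i, x t i = 1 := fun t ht =>
    (sum_eq_of_hasDerivAt_selfAppraisalField (fun t ht => (hC t ht).2.1) hdyn ht).trans hx0.2
  exact fun t ht => ⟨nonneg_of_hasDerivAt_selfAppraisalField (fun t ht => (hC t ht).1)
    (fun t ht => (hC t ht).2.2.1) hdyn hsum hx0.1 ht, hsum t ht⟩
end

section
/- Let x : ℝ → ℝ satisfy the differential inequality ẋ(t) ≤ −(x(t) − h₀)·g(t) on [a, b], where g(t) ≥ 0 for all t and h₀ is a constant with x(a) ≤ h₀. Then for all t ∈ [a, b], x(t) ≤ e^{−∫ₐᵗ g(s)ds} x(a) + (1 − e^{−∫ₐᵗ g(s)ds}) h₀. -/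
open intervalIntegral

/-- Grönwall-type estimate: if ẋ(t) ≤ −(x(t) − h₀)g(t) on [a,b] with g ≥ 0
continuous and x(a) ≤ h₀, then
x(t) ≤ e^{−∫ₐᵗ g} x(a) + (1 − e^{−∫ₐᵗ g}) h₀ on [a,b]. -/
theorem gronwall_estimate (a b h₀ : ℝ) (hab : a ≤ b)
    (x x' g : ℝ → ℝ)
    (hg_cont : ContinuousOn g (Set.Icc a b))
    (hg_nonneg : ∀ t, 0 ≤ g t)
    (hxa : x a ≤ h₀)
    (hderiv : ∀ t ∈ Set.Icc a b, HasDerivAt x (x' t) t)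
    (hineq : ∀ t ∈ Set.Icc a b, x' t ≤ -(x t - h₀) * g t) :
    ∀ t ∈ Set.Icc a b,
      x t ≤ Real.exp (-(∫ s in a..t, g s)) * x a +
            (1 - Real.exp (-(∫ s in a..t, g s))) * h₀ := by
  set G : ℝ → ℝ := fun t => ∫ s in a..t, g s with hGdef
  have hg_int : MeasureTheory.IntegrableOn g (Set.Icc a b) := hg_cont.integrableOn_Icc
  have hGcont : ContinuousOn G (Set.Icc a b) := by
    have := intervalIntegral.continuousOn_primitive_interval
      (f := g) (a := a) (b := b) (by rwa [Set.uIcc_of_le hab])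
    rwa [Set.uIcc_of_le hab] at this
  have hGderiv : ∀ t ∈ Set.Ioo a b, HasDerivAt G (g t) t := by
    intro t ht
    have h1 : IntervalIntegrable g MeasureTheory.volume a t :=
      (intervalIntegrable_iff_integrableOn_Icc_of_le ht.1.le).2 (hg_int.mono_set (Set.Icc_subset_Icc le_rfl ht.2.le))
    have h2 : StronglyMeasurableAtFilter g (nhds t) :=
      (hg_cont.mono Set.Ioo_subset_Icc_self).stronglyMeasurableAtFilter isOpen_Ioo t ht
    have h3 : ContinuousAt g t := hg_cont.continuousAt (Icc_mem_nhds ht.1 ht.2)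
    exact intervalIntegral.integral_hasDerivAt_right h1 h2 h3
  set F : ℝ → ℝ := fun t => (x t - h₀) * Real.exp (G t) with hFdef
  have hFderiv : ∀ t ∈ Set.Ioo a b,
      HasDerivAt F (x' t * Real.exp (G t) + (x t - h₀) * (Real.exp (G t) * g t)) t := by
    intro t ht
    exact ((hderiv t (Set.mem_Icc_of_Ioo ht)).sub_const h₀).mul ((hGderiv t ht).exp)
  have hFanti : AntitoneOn F (Set.Icc a b) := by
    apply antitoneOn_of_deriv_nonpos (convex_Icc a b)
    · exact ((ContinuousOn.sub (fun t ht => (hderiv t ht).continuousAt.continuousWithinAt)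
        continuousOn_const).mul (hGcont.rexp))
    · rw [interior_Icc]
      intro t ht
      exact (hFderiv t ht).differentiableAt.differentiableWithinAt
    · rw [interior_Icc]
      intro t ht
      rw [(hFderiv t ht).deriv]
      have h1 := hineq t (Set.mem_Icc_of_Ioo ht)
      have h2 := (Real.exp_pos (G t)).le
      nlinarith [mul_le_mul_of_nonneg_right h1 h2]
  intro t ht
  have hFle : F t ≤ F a := hFanti (Set.left_mem_Icc.2 hab) ht ht.1
  have hGa : G a = 0 := intervalIntegral.integral_same
  have hFa : F a = x a - h₀ := by simp [hFdef, hGa]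
  rw [hFa] at hFle
  have hE : Real.exp (-(G t)) * Real.exp (G t) = 1 := by
    rw [← Real.exp_add]; simp
  have key := mul_le_mul_of_nonneg_right hFle (Real.exp_pos (-(G t))).le
  have : (x t - h₀) * Real.exp (G t) * Real.exp (-(G t)) = x t - h₀ := by
    rw [mul_assoc, mul_comm (Real.exp (G t)), hE, mul_one]
  rw [this] at key
  nlinarith [key]
end

section
/- Let x ∈ Δₙ with n ≥ 3 and let v be a value satisfying v ≤ ∑ⱼ cⱼ xⱼ where c is a nonnegative vector with ∑ⱼ cⱼ = 1 and cᵢ₀ ≥ γ > 0 for some fixed index i₀ with xᵢ₀ ≤ α l + (1 − α) h, where l = minⱼ xⱼ, h = maxⱼ xⱼ, and α, γ ∈ (0, 1]. Then v ≤ αγ l + (1 − αγ) h. -/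
/-- Convex-combination bound: if the weight on index i₀ is at least γ and
x i₀ ≤ αl + (1−α)h, then any v ≤ ∑ c j x j satisfies v ≤ αγl + (1−αγ)h. -/
theorem convex_combination_bound (n : ℕ) (hn : 3 ≤ n)
    (x : Fin n → ℝ) (hx : ∀ i, 0 ≤ x i) (hxsum : ∑ i, x i = 1)
    (c : Fin n → ℝ) (hc : ∀ j, 0 ≤ c j) (hcsum : ∑ j, c j = 1)
    (γ α : ℝ) (hγ : γ ∈ Set.Ioc (0 : ℝ) 1) (hα : α ∈ Set.Ioc (0 : ℝ) 1)
    (i₀ : Fin n) (hci₀ : γ ≤ c i₀)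
    (hxi₀ : x i₀ ≤ α * (⨅ j, x j) + (1 - α) * (⨆ j, x j))
    (v : ℝ) (hv : v ≤ ∑ j, c j * x j) :
    v ≤ α * γ * (⨅ j, x j) + (1 - α * γ) * (⨆ j, x j) := by
  haveI : Nonempty (Fin n) := ⟨⟨0, by omega⟩⟩
  set l := ⨅ j, x j with hl
  set h := ⨆ j, x j with hh
  have hL : ∀ j, l ≤ x j := fun j => ciInf_le (Finite.bddBelow_range x) j
  have hH : ∀ j, x j ≤ h := fun j => le_ciSup (Finite.bddAbove_range x) j
  have hlh : l ≤ h := (hL i₀).trans (hH i₀)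
  have hsplit : ∑ j, c j * x j = c i₀ * x i₀ + ∑ j ∈ Finset.univ.erase i₀, c j * x j :=
    (Finset.add_sum_erase _ _ (Finset.mem_univ i₀)).symm
  have hcerase : ∑ j ∈ Finset.univ.erase i₀, c j = 1 - c i₀ := by
    have := Finset.add_sum_erase Finset.univ c (Finset.mem_univ i₀)
    linarith [hcsum ▸ this]
  have hbound : ∑ j ∈ Finset.univ.erase i₀, c j * x j ≤ (1 - c i₀) * h := by
    calc ∑ j ∈ Finset.univ.erase i₀, c j * x j
        ≤ ∑ j ∈ Finset.univ.erase i₀, c j * h := by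
          apply Finset.sum_le_sum
          intro j _
          exact mul_le_mul_of_nonneg_left (hH j) (hc j)
      _ = (1 - c i₀) * h := by rw [← Finset.sum_mul, hcerase]
  have hx0h : x i₀ ≤ h := hH i₀
  obtain ⟨hγ0, hγ1⟩ := hγ
  obtain ⟨hα0, hα1⟩ := hα
  have key : c i₀ * x i₀ + (1 - c i₀) * h ≤ α * γ * l + (1 - α * γ) * h := by
    nlinarith [mul_le_mul_of_nonneg_left hxi₀ hγ0.le,
      mul_le_mul_of_nonneg_right hci₀ (sub_nonneg.2 hx0h)]
  linarith [hsplit ▸ hv]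
end

section
/- Let V_i(t, x), i = 1,…,n, be C¹ functions and V(t, x) = maxᵢ V_i(t, x). Along a C¹ trajectory x(t), the upper Dini derivative of t ↦ V(t, x(t)) satisfies D⁺V(t, x(t)) = max_{i ∈ I(t)} (d/dt)V_i(t, x(t)), where I(t) = {i : V(t, x(t)) = V_i(t, x(t))} is the set of maximizing indices at time t. -/
/-!
Only the active indices matter: an index `i` with `V_i < V` at time `t` stays strictly below some
active index for nearby times, by continuity. So for small `s > 0` the maximum is taken over the
active indices only, all of which share the value `V(t, x(t))` at time `t`; the difference
quotient of the maximum is then the maximum of the difference quotients, and each of these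
converges to the corresponding derivative. In particular the limsup is an actual limit.
-/

open Filter Set Topology

theorem Filter.Tendsto.ciSup_of_finite {ι α L : Type*} [Finite ι] [Nonempty ι]
    [ConditionallyCompleteLattice L] [TopologicalSpace L] [ContinuousSup L]
    {f : ι → α → L} {g : ι → L} {l : Filter α} (hf : ∀ i, Tendsto (f i) l (𝓝 (g i))) :
    Tendsto (fun a => ⨆ i, f i a) l (𝓝 (⨆ i, g i)) := by
  cases nonempty_fintype ι
  simpa only [← Finset.sup'_univ_eq_ciSup] using
    Tendsto.finset_sup'_nhds_apply Finset.univ_nonempty fun i _ => hf i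

theorem eventually_ciSup_eq_ciSup_active {ι α L : Type*} [Finite ι] [Nonempty ι]
    [TopologicalSpace α] [ConditionallyCompleteLinearOrder L] [TopologicalSpace L]
    [OrderClosedTopology L] {f : ι → α → L} {a : α} (hf : ∀ i, ContinuousAt (f i) a) :
    ∀ᶠ x in 𝓝 a, ⨆ i, f i x = ⨆ i : {i // ⨆ j, f j a = f i a}, f i x := by
  obtain ⟨i₀, hi₀⟩ := exists_eq_ciSup_of_finite (f := fun i => f i a)
  have : Nonempty {i // ⨆ j, f j a = f i a} := ⟨⟨i₀, hi₀.symm⟩⟩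
  have hbelow : ∀ i, ∀ᶠ x in 𝓝 a, ∃ j : {i // ⨆ j, f j a = f i a}, f i x ≤ f j x := by
    intro i
    by_cases hi : ⨆ j, f j a = f i a
    · exact Eventually.of_forall fun x => ⟨⟨i, hi⟩, le_rfl⟩
    · have hlt : f i a < f i₀ a :=
        hi₀ ▸ lt_of_le_of_ne (le_ciSup (Finite.bddAbove_range (f · a)) i) (Ne.symm hi)
      filter_upwards [(hf i).eventually_lt (hf i₀) hlt] with x hx
      exact ⟨⟨i₀, hi₀.symm⟩, hx.le⟩
  filter_upwards [eventually_all.2 hbelow] with x hx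
  have hbdd : BddAbove (range fun j : {i // ⨆ j, f j a = f i a} => f j x) :=
    Finite.bddAbove_range _
  exact le_antisymm (ciSup_le fun i => (hx i).elim fun j hj => le_ciSup_of_le hbdd j hj)
    (ciSup_le fun j => le_ciSup (Finite.bddAbove_range (f · x)) _)

theorem tendsto_slope_ciSup_nhdsGT {ι : Type*} [Finite ι] {g : ι → ℝ → ℝ} {t : ℝ}
    (hg : ∀ i, DifferentiableAt ℝ (g i) t) :
    Tendsto (fun s => ((⨆ i, g i (t + s)) - ⨆ i, g i t) / s) (𝓝[>] 0)
      (𝓝 (⨆ i : {i // ⨆ j, g j t = g i t}, deriv (g i) t)) := by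
  rcases isEmpty_or_nonempty ι with _ | _
  · simp
  set c := ⨆ j, g j t
  obtain ⟨i₀, hi₀⟩ := exists_eq_ciSup_of_finite (f := fun i => g i t)
  have : Nonempty {i // c = g i t} := ⟨⟨i₀, hi₀.symm⟩⟩
  have hslope : ∀ i : {i // c = g i t},
      Tendsto (fun s => (g i (t + s) - c) / s) (𝓝[>] 0) (𝓝 (deriv (g i) t)) := by
    intro i
    simpa [i.2, div_eq_inv_mul] using (hg i).hasDerivAt.tendsto_slope_zero_right
  have hshift : Tendsto (t + ·) (𝓝[>] (0 : ℝ)) (𝓝 t) :=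
    ((continuous_const.add continuous_id).tendsto' 0 t (add_zero t)).mono_left nhdsWithin_le_nhds
  refine (Tendsto.ciSup_of_finite hslope).congr' ?_
  filter_upwards [hshift.eventually (eventually_ciSup_eq_ciSup_active fun i =>
    (hg i).continuousAt), self_mem_nhdsWithin] with s hactive (hs : 0 < s)
  rw [hactive]
  exact (Monotone.map_ciSup_of_continuousAt (f := fun y => (y - c) / s)
    (by fun_prop) (fun _ _ h => div_le_div_of_nonneg_right (sub_le_sub_right h c) hs.le)
    (Finite.bddAbove_range _)).symm

theorem dini_derivative_of_max_general (n m : ℕ)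
    (Vi : Fin n → ℝ → (Fin m → ℝ) → ℝ)
    (hVi : ∀ i, ContDiff ℝ 1 (fun p : ℝ × (Fin m → ℝ) => Vi i p.1 p.2))
    (x : ℝ → Fin m → ℝ) (hx : ContDiff ℝ 1 x) :
    ∀ t : ℝ,
      Filter.limsup
        (fun s => ((⨆ i, Vi i (t + s) (x (t + s))) - ⨆ i, Vi i t (x t)) / s)
        (nhdsWithin 0 (Set.Ioi 0)) =
      ⨆ i : {i : Fin n // (⨆ j, Vi j t (x t)) = Vi i t (x t)},
        deriv (fun s => Vi i.1 s (x s)) t := by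
  intro t
  have hdiff : ∀ i, DifferentiableAt ℝ (fun s => Vi i s (x s)) t := fun i =>
    ((hVi i).comp (contDiff_id.prodMk hx)).differentiable one_ne_zero t
  exact (tendsto_slope_ciSup_nhdsGT hdiff).limsup_eq

/-- Danskin-type formula for the upper Dini derivative of a pointwise maximum
of C¹ functions along a C¹ trajectory: D⁺V(t, x(t)) equals the maximum of the
derivatives of the active functions. -/
theorem dini_derivative_of_max (n m : ℕ) (hn : 0 < n)
    (Vi : Fin n → ℝ → (Fin m → ℝ) → ℝ)
    (hVi : ∀ i, ContDiff ℝ 1 (fun p : ℝ × (Fin m → ℝ) => Vi i p.1 p.2))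
    (x : ℝ → Fin m → ℝ) (hx : ContDiff ℝ 1 x) :
    ∀ t : ℝ,
      Filter.limsup
        (fun s => ((⨆ i, Vi i (t + s) (x (t + s))) - ⨆ i, Vi i t (x t)) / s)
        (nhdsWithin 0 (Set.Ioi 0)) =
      ⨆ i : {i : Fin n // (⨆ j, Vi j t (x t)) = Vi i t (x t)},
        deriv (fun s => Vi i.1 s (x s)) t :=
  dini_derivative_of_max_general n m Vi hVi x hx
end
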